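/- Let k ≥ 1 and 1 ≤ s ≤ k, let 1 ≤ q ≤ s, and let π_1 + … + π_q = s be a partition of s into positive integers. Let Q be the graph whose vertex set is the disjoint union of sets B_1, …, B_q with |B_i| = π_i and sets H_1, …, H_q each of size k − s, in which all vertices of B_1 ∪ … ∪ B_q are pairwise adjacent, each H_i induces a complete graph, and every vertex of B_i is adjacent to every vertex of H_i for each i (with no other adjacencies). Then for every vertex v of Q, there exists a k-ranking of Q in which v is the unique vertex with label 1. -/

import Mathlib

/-- A `k`-ranking of a simple graph `G`: a labeling of the vertices with values from
`{1, …, k}` such that every path joining two distinct vertices with the same label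
contains a vertex with a strictly higher label. -/
def IsRanking {V : Type*} (G : SimpleGraph V) (k : ℕ) (f : V → ℕ) : Prop :=
  (∀ v, 1 ≤ f v ∧ f v ≤ k) ∧
  ∀ ⦃u v : V⦄ (p : G.Walk u v), p.IsPath → u ≠ v → f u = f v →
    ∃ w ∈ p.support, f u < f w

/-- The tree-depth of `G`: the least `k` such that `G` admits a `k`-ranking. -/
noncomputable def treedepth {V : Type*} (G : SimpleGraph V) : ℕ :=
  sInf {k | ∃ f, IsRanking G k f}

/-- The block index of a vertex of the graph `Q`: vertices are either in one of the
parts `B_i` of the central clique (left summand, `Sum.inl ⟨i, _⟩`) or in the outer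
clique `H_i` (right summand, `Sum.inr (i, _)`). -/
def qIdx {q h : ℕ} {π : Fin q → ℕ} : ((Σ i : Fin q, Fin (π i)) ⊕ (Fin q × Fin h)) → Fin q
  | Sum.inl x => x.1
  | Sum.inr x => x.1

/-- The graph `Q`: the central clique `B_1 ∪ ⋯ ∪ B_q` (with `|B_i| = π i`) together with
disjoint cliques `H_1, …, H_q` each of size `h`, where every vertex of `B_i` is joined to
every vertex of `H_i`. Two distinct vertices are adjacent iff they both lie in the
central clique, or they have the same block index. -/
def Qgraph (q h : ℕ) (π : Fin q → ℕ) :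
    SimpleGraph ((Σ i : Fin q, Fin (π i)) ⊕ (Fin q × Fin h)) where
  Adj x y := x ≠ y ∧ ((x.isLeft ∧ y.isLeft) ∨ qIdx x = qIdx y)
  symm := by
    constructor
    rintro x y ⟨hne, h | h⟩
    · exact ⟨hne.symm, Or.inl ⟨h.2, h.1⟩⟩
    · exact ⟨hne.symm, Or.inr h.symm⟩
  loopless := ⟨fun x hx => hx.1 rfl⟩

/-!
A vertex of `H_i` can only leave `H_i` through `B_i`. So label the central clique injectively
by `h + 1, …, h + s` (with `h = k - s`), lowering one chosen vertex `b₀ ∈ B_{i₀}` to some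
`c ≤ h + 1`, and label every `H_i` injectively inside `{1, …, h + 1}`, avoiding `c` on `H_{i₀}`.
Then whenever two vertices share a label, one of them lies in some `H_i` with `i ≠ i₀` and the
other outside it, and the path between them meets `B_i`, whose labels are all at least `h + 2`.
The vertex `v` is made the unique `1` by taking `b₀ = v, c = 1` if `v` is central, and otherwise
`b₀ ∈ B_{i₀}`, `c = h + 1`, with `H_{i₀}` labelled `1, …, h` so that `v` gets `1`.
-/

open Function Sum

theorem exists_equiv_fin_apply_eq_zero {α : Type*} [Fintype α] {n : ℕ}
    (hn : Fintype.card α = n) (a : α) : ∃ e : α ≃ Fin n, (e a : ℕ) = 0 := by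
  let e := Fintype.equivFinOfCardEq hn
  exact ⟨e.trans (Equiv.swap (e a) ⟨0, (e a).pos⟩), by simp⟩

namespace Qgraph

variable {q h : ℕ} {π : Fin q → ℕ}

theorem exists_inl_mem_support_of_walk {i : Fin q} {j : Fin h}
    {w : (Σ i : Fin q, Fin (π i)) ⊕ (Fin q × Fin h)} (p : (Qgraph q h π).Walk (inr (i, j)) w)
    (hw : ∀ j', w ≠ inr (i, j')) : ∃ b, inl ⟨i, b⟩ ∈ p.support := by
  obtain ⟨d, hd, ⟨j₁, hj₁⟩, hout⟩ :=
    p.exists_boundary_dart (Set.range fun j' => inr (i, j')) ⟨j, rfl⟩ (by simpa [eq_comm] using hw)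
  have hadj := d.adj
  rw [← hj₁] at hadj
  have hsnd := p.dart_snd_mem_support_of_mem_darts hd
  rcases hx : d.snd with ⟨i', b⟩ | ⟨i', j'⟩ <;>
    rw [hx] at hadj hout hsnd <;> simp only [Qgraph, qIdx, isLeft_inr, isLeft_inl] at hadj
  · obtain rfl : i = i' := by simpa using hadj.2
    exact ⟨b, hsnd⟩
  · obtain rfl : i = i' := by simpa using hadj.2
    exact absurd ⟨j', rfl⟩ hout

def rankingLabel {s : ℕ} (e : (Σ i : Fin q, Fin (π i)) ≃ Fin s) (b₀ : Σ i : Fin q, Fin (π i))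
    (c : ℕ) (ℓ₀ : Fin h → ℕ) : (Σ i : Fin q, Fin (π i)) ⊕ (Fin q × Fin h) → ℕ
  | inl b => if b = b₀ then c else h + 1 + e b
  | inr (i, j) => if i = b₀.1 then ℓ₀ j else j + 2

section rankingLabel

variable {s : ℕ} {e : (Σ i : Fin q, Fin (π i)) ≃ Fin s} {b₀ : Σ i : Fin q, Fin (π i)} {c : ℕ}
  {ℓ₀ : Fin h → ℕ}

@[simp]
theorem rankingLabel_inl_self : rankingLabel e b₀ c ℓ₀ (inl b₀) = c := by
  simp [rankingLabel]

@[simp]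
theorem rankingLabel_inr_fst_self (j : Fin h) :
    rankingLabel e b₀ c ℓ₀ (inr (b₀.1, j)) = ℓ₀ j := by
  simp [rankingLabel]

theorem le_rankingLabel_inl (he : (e b₀ : ℕ) = 0) {b : Σ i : Fin q, Fin (π i)} (hb : b ≠ b₀) :
    h + 2 ≤ rankingLabel e b₀ c ℓ₀ (inl b) := by
  have : (e b : ℕ) ≠ 0 := fun h0 => hb (e.injective (Fin.ext (h0.trans he.symm)))
  simp only [rankingLabel, if_neg hb]
  omega

theorem rankingLabel_inr_le (hℓ₀ : ∀ j, ℓ₀ j ≤ h + 1) (x : Fin q × Fin h) :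
    rankingLabel e b₀ c ℓ₀ (inr x) ≤ h + 1 := by
  obtain ⟨i, j⟩ := x
  simp only [rankingLabel]
  split_ifs
  · exact hℓ₀ j
  · omega

theorem rankingLabel_inl_injective (he : (e b₀ : ℕ) = 0) (hc : c ≤ h + 1) :
    Injective (rankingLabel e b₀ c ℓ₀ ∘ inl) := by
  have key : ∀ b, b ≠ b₀ → rankingLabel e b₀ c ℓ₀ (inl b) ≠ rankingLabel e b₀ c ℓ₀ (inl b₀) := by
    intro b hb
    have := le_rankingLabel_inl (c := c) (ℓ₀ := ℓ₀) he hb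
    rw [rankingLabel_inl_self]
    omega
  intro a b hab
  by_cases ha : a = b₀ <;> by_cases hb : b = b₀
  · rw [ha, hb]
  · subst ha; exact absurd hab.symm (key b hb)
  · subst hb; exact absurd hab (key a ha)
  · simp only [comp_apply, rankingLabel, if_neg ha, if_neg hb, add_right_inj] at hab
    exact e.injective (Fin.ext hab)

theorem rankingLabel_inr_injective (hℓ₀ : Injective ℓ₀) (i : Fin q) :
    Injective fun j => rankingLabel e b₀ c ℓ₀ (inr (i, j)) := by
  intro j j' hjj
  by_cases hi : i = b₀.1
  · simp only [rankingLabel, if_pos hi] at hjj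
    exact hℓ₀ hjj
  · simp only [rankingLabel, if_neg hi, add_left_inj] at hjj
    exact Fin.ext hjj

theorem exists_lt_rankingLabel_of_walk (he : (e b₀ : ℕ) = 0) (hℓ₀ : ∀ j, ℓ₀ j ≤ h + 1)
    {i : Fin q} (hi : i ≠ b₀.1) {j : Fin h} {w : (Σ i : Fin q, Fin (π i)) ⊕ (Fin q × Fin h)}
    (p : (Qgraph q h π).Walk (inr (i, j)) w) (hw : ∀ j', w ≠ inr (i, j')) :
    ∃ x ∈ p.support, rankingLabel e b₀ c ℓ₀ (inr (i, j)) < rankingLabel e b₀ c ℓ₀ x := by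
  obtain ⟨b, hb⟩ := exists_inl_mem_support_of_walk p hw
  refine ⟨_, hb, ?_⟩
  have := le_rankingLabel_inl (c := c) (ℓ₀ := ℓ₀) he (b := ⟨i, b⟩)
    fun h' => hi (congrArg Sigma.fst h')
  have := rankingLabel_inr_le (e := e) (b₀ := b₀) (c := c) hℓ₀ (i, j)
  omega

theorem exists_inr_of_rankingLabel_eq (he : (e b₀ : ℕ) = 0) (hc : c ≤ h + 1)
    (hℓ₀ : Injective ℓ₀) (hℓ₀le : ∀ j, ℓ₀ j ≤ h + 1) (hcℓ₀ : ∀ j, ℓ₀ j ≠ c)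
    {u w : (Σ i : Fin q, Fin (π i)) ⊕ (Fin q × Fin h)} (huw : u ≠ w)
    (heq : rankingLabel e b₀ c ℓ₀ u = rankingLabel e b₀ c ℓ₀ w) :
    ∃ i ≠ b₀.1, ∃ j, (u = inr (i, j) ∧ ∀ j', w ≠ inr (i, j')) ∨
      (w = inr (i, j) ∧ ∀ j', u ≠ inr (i, j')) := by
  have hmix : ∀ a i j, rankingLabel e b₀ c ℓ₀ (inl a) = rankingLabel e b₀ c ℓ₀ (inr (i, j)) →
      i ≠ b₀.1 := by
    intro a i j hai hi
    obtain rfl : a = b₀ := by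
      by_contra ha
      have := le_rankingLabel_inl (c := c) (ℓ₀ := ℓ₀) he ha
      have := rankingLabel_inr_le (e := e) (b₀ := b₀) (c := c) hℓ₀le (i, j)
      omega
    simp only [rankingLabel, if_pos hi] at hai
    exact hcℓ₀ j hai.symm
  rcases u with a | ⟨i, j⟩ <;> rcases w with b | ⟨i', j'⟩
  · exact absurd (congrArg inl (rankingLabel_inl_injective he hc heq)) huw
  · exact ⟨i', hmix a i' j' heq, j', Or.inr ⟨rfl, by simp⟩⟩
  · exact ⟨i, hmix b i j heq.symm, j, Or.inl ⟨rfl, by simp⟩⟩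
  by_cases hii : i = i'
  · subst hii
    exact absurd (by rw [rankingLabel_inr_injective hℓ₀ i heq]) huw
  by_cases hi : i = b₀.1
  · exact ⟨i', fun h' => hii (hi.trans h'.symm), j', Or.inr ⟨rfl, by simp [hii]⟩⟩
  · exact ⟨i, hi, j, Or.inl ⟨rfl, by simp [Ne.symm hii]⟩⟩

theorem isRanking_rankingLabel {k : ℕ} (hk : h + s ≤ k) (he : (e b₀ : ℕ) = 0) (hc₁ : 1 ≤ c)
    (hc : c ≤ h + 1) (hℓ₀ : Injective ℓ₀) (hℓ₀mem : ∀ j, 1 ≤ ℓ₀ j ∧ ℓ₀ j ≤ h + 1)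
    (hcℓ₀ : ∀ j, ℓ₀ j ≠ c) :
    IsRanking (Qgraph q h π) k (rankingLabel e b₀ c ℓ₀) := by
  refine ⟨?_, fun u w p _ huw heq => ?_⟩
  · rintro (b | ⟨i, j⟩) <;> simp only [rankingLabel] <;> split_ifs
    · omega
    · have := (e b).2; omega
    · have := hℓ₀mem j; omega
    · omega
  obtain ⟨i, hi, j, ⟨rfl, hw⟩ | ⟨rfl, hu⟩⟩ :=
    exists_inr_of_rankingLabel_eq he hc hℓ₀ (fun j => (hℓ₀mem j).2) hcℓ₀ huw heq
  · exact exists_lt_rankingLabel_of_walk he (fun j => (hℓ₀mem j).2) hi p hw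
  · obtain ⟨x, hx, hlt⟩ := exists_lt_rankingLabel_of_walk he (fun j => (hℓ₀mem j).2) hi p.reverse hu
    exact ⟨x, by simpa using hx, heq ▸ hlt⟩

theorem rankingLabel_eq_one_cases (he : (e b₀ : ℕ) = 0)
    {w : (Σ i : Fin q, Fin (π i)) ⊕ (Fin q × Fin h)} (hw : rankingLabel e b₀ c ℓ₀ w = 1) :
    (w = inl b₀ ∧ c = 1) ∨ ∃ j, w = inr (b₀.1, j) ∧ ℓ₀ j = 1 := by
  rcases w with b | ⟨i, j⟩
  · by_cases hb : b = b₀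
    · subst hb
      exact Or.inl ⟨rfl, by simpa using hw⟩
    · have := le_rankingLabel_inl (c := c) (ℓ₀ := ℓ₀) he hb
      omega
  · by_cases hi : i = b₀.1
    · subst hi
      exact Or.inr ⟨j, rfl, by simpa using hw⟩
    · simp [rankingLabel, hi] at hw

end rankingLabel

end Qgraph

theorem Qgraph_oneUnique_general (k s q : ℕ) (hsk : s ≤ k)
    (π : Fin q → ℕ) (hπ : ∀ i, 1 ≤ π i)
    (hsum : ∑ i, π i = s)
    (v : (Σ i : Fin q, Fin (π i)) ⊕ (Fin q × Fin (k - s))) :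
    ∃ f : ((Σ i : Fin q, Fin (π i)) ⊕ (Fin q × Fin (k - s))) → ℕ,
      IsRanking (Qgraph q (k - s) π) k f ∧ f v = 1 ∧ ∀ w, f w = 1 → w = v := by
  have hcard : Fintype.card (Σ i : Fin q, Fin (π i)) = s := by simp [hsum]
  have hk : k - s + s ≤ k := by omega
  rcases v with b₀ | ⟨i₀, j₀⟩
  · obtain ⟨e, he⟩ := exists_equiv_fin_apply_eq_zero hcard b₀
    have hL := Qgraph.isRanking_rankingLabel (ℓ₀ := fun j : Fin (k - s) => j + 2) hk he le_rfl
      (by omega) (fun _ _ h => Fin.ext (by simpa using h)) (fun j => by omega) (fun j => by omega)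
    refine ⟨_, hL, by simp, fun w hw => ?_⟩
    obtain ⟨rfl, -⟩ | ⟨j, -, hj⟩ := Qgraph.rankingLabel_eq_one_cases he hw
    · rfl
    · omega
  · have hh : 0 < k - s := j₀.pos
    obtain ⟨e, he⟩ := exists_equiv_fin_apply_eq_zero hcard ⟨i₀, ⟨0, hπ i₀⟩⟩
    let σ := Equiv.swap j₀ ⟨0, hh⟩
    have hL := Qgraph.isRanking_rankingLabel (ℓ₀ := fun j => σ j + 1) hk he le_add_self le_rfl
      (fun _ _ h => σ.injective (Fin.ext (by simpa using h)))
      (fun j => by have := (σ j).2; omega) (fun j => by have := (σ j).2; omega)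
    refine ⟨_, hL, (Qgraph.rankingLabel_inr_fst_self j₀).trans (by simp [σ]), fun w hw => ?_⟩
    obtain ⟨-, hc⟩ | ⟨j, rfl, hj⟩ := Qgraph.rankingLabel_eq_one_cases he hw
    · omega
    · rw [σ.injective (Fin.ext (by simpa [σ] using hj) : σ j = σ j₀)]

/-- For `1 ≤ s ≤ k`, `1 ≤ q ≤ s`, and a partition `π_1 + ⋯ + π_q = s` of `s` into
positive integers, every vertex of the graph `Q` (built from cliques `B_i` with
`|B_i| = π i` and `H_i` with `|H_i| = k − s`) is the unique vertex with label 1 in some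
`k`-ranking of `Q`. -/
theorem Qgraph_oneUnique (k s q : ℕ) (hk : 1 ≤ k) (hs1 : 1 ≤ s) (hsk : s ≤ k)
    (hq1 : 1 ≤ q) (hqs : q ≤ s) (π : Fin q → ℕ) (hπ : ∀ i, 1 ≤ π i)
    (hsum : ∑ i, π i = s)
    (v : (Σ i : Fin q, Fin (π i)) ⊕ (Fin q × Fin (k - s))) :
    ∃ f : ((Σ i : Fin q, Fin (π i)) ⊕ (Fin q × Fin (k - s))) → ℕ,
      IsRanking (Qgraph q (k - s) π) k f ∧ f v = 1 ∧ ∀ w, f w = 1 → w = v :=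
  Qgraph_oneUnique_general k s q hsk π hπ hsum v
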